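/- For any policy π in the risk-averse online learning setup, R_π(T) ≤ Σ_{k=1}^K E[τ_{k,T}]·Γ_k + (K−1)·Σ_{k∈[K]\{k*}} Σ_{t=1}^T min( Pr[π_t = k], 1/4 )·Δ_k². -/

import Mathlib

/-! Since `π_t` is independent of the time-`t` rewards, the played reward `X_{π_t,t}` is the
mixture of the `X_{k,t}` with weights `p_k = Pr[π_t = k]`. By the law of total variance its
mean-variance is `Σ_k p_k MV_k` plus the variance `Σ_k p_k μ_k² - (Σ_k p_k μ_k)²` of the arm means
under `p`. Centred at `μ_{k*}`, that variance is a quadratic form in `d_k = Δ_k` (`d_{k*} = 0`)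
whose entries are bounded using `p_k p_j ≤ min(p_k, 1/4)` (as `p_k + p_j ≤ 1`) and
`-2 d_k d_j ≤ d_k² + d_j²`; this gives `(K - 1) Σ_{k ≠ k*} min(p_k, 1/4) Δ_k²`. Summing over `t`,
with `E[τ_{k,T}] = Σ_t Pr[π_t = k]`, yields the bound. -/

open MeasureTheory ProbabilityTheory Finset

lemma mul_le_min_quarter {a b : ℝ} (ha : 0 ≤ a) (hb : 0 ≤ b) (hab : a + b ≤ 1) :
    a * b ≤ min a (1 / 4) :=
  le_min (by nlinarith) (by nlinarith [sq_nonneg (a - b)])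

section WeightedVariance

variable {ι : Type*}

lemma weighted_variance_sub_const (s : Finset ι) (p x : ι → ℝ) (c : ℝ)
    (hp : ∑ k ∈ s, p k = 1) :
    ∑ k ∈ s, p k * (x k - c) ^ 2 - (∑ k ∈ s, p k * (x k - c)) ^ 2
      = ∑ k ∈ s, p k * x k ^ 2 - (∑ k ∈ s, p k * x k) ^ 2 := by
  have h2 : ∑ k ∈ s, p k * (x k - c) ^ 2
      = ∑ k ∈ s, p k * x k ^ 2 - 2 * c * ∑ k ∈ s, p k * x k + c ^ 2 * ∑ k ∈ s, p k := by
    simp only [mul_sum, ← sum_sub_distrib, ← sum_add_distrib]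
    exact sum_congr rfl fun k _ => by ring
  have h1 : ∑ k ∈ s, p k * (x k - c) = ∑ k ∈ s, p k * x k - c * ∑ k ∈ s, p k := by
    simp only [mul_sum, ← sum_sub_distrib]
    exact sum_congr rfl fun k _ => by ring
  rw [h1, h2, hp]
  ring

lemma weighted_variance_le_card_mul [DecidableEq ι] (s : Finset ι) (p d : ι → ℝ)
    (hp : ∀ k ∈ s, 0 ≤ p k) (hs : ∑ k ∈ s, p k ≤ 1) :
    ∑ k ∈ s, p k * d k ^ 2 - (∑ k ∈ s, p k * d k) ^ 2
      ≤ s.card * ∑ k ∈ s, min (p k) (1 / 4) * d k ^ 2 := by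
  set c : ι → ℝ := fun k => min (p k) (1 / 4) * d k ^ 2
  have hpair : ∀ k ∈ s, ∀ j ∈ s, k ≠ j → p k + p j ≤ 1 := fun k hk j hj hkj =>
    (sum_pair hkj).symm.le.trans <|
      (sum_le_sum_of_subset_of_nonneg (by simp [insert_subset_iff, hk, hj])
        fun i hi _ => hp i hi).trans hs
  have hle_one : ∀ k ∈ s, p k ≤ 1 := fun k hk =>
    (single_le_sum hp hk).trans hs
  have hentry : ∀ k ∈ s, ∀ j ∈ s,
      (if k = j then p k * d k ^ 2 else 0) - p k * d k * (p j * d j) ≤ (c k + c j) / 2 := by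
    intro k hk j hj
    split_ifs with hkj
    · subst hkj
      have := mul_le_min_quarter (hp k hk) (sub_nonneg.2 (hle_one k hk)) (by linarith)
      have := mul_le_mul_of_nonneg_right this (sq_nonneg (d k))
      simp only [c]
      linarith
    · have hk' := mul_le_mul_of_nonneg_right
        (mul_le_min_quarter (hp k hk) (hp j hj) (hpair k hk j hj hkj)) (sq_nonneg (d k))
      have hj' := mul_le_mul_of_nonneg_right
        (mul_le_min_quarter (hp j hj) (hp k hk) (by linarith [hpair k hk j hj hkj]))
        (sq_nonneg (d j))
      nlinarith [mul_nonneg (hp k hk) (hp j hj), sq_nonneg (d k + d j)]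
  calc ∑ k ∈ s, p k * d k ^ 2 - (∑ k ∈ s, p k * d k) ^ 2
      = ∑ k ∈ s, ∑ j ∈ s, ((if k = j then p k * d k ^ 2 else 0) - p k * d k * (p j * d j)) := by
        simp only [sum_sub_distrib, sum_ite_eq, sum_ite_mem, inter_self, sq, sum_mul_sum]
    _ ≤ ∑ k ∈ s, ∑ j ∈ s, (c k + c j) / 2 :=
        sum_le_sum fun k hk => sum_le_sum fun j hj => hentry k hk j hj
    _ = s.card * ∑ k ∈ s, c k := by
        simp only [← sum_div, sum_add_distrib, sum_const, nsmul_eq_mul, ← mul_sum]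
        ring

lemma weighted_variance_le_of_sum_eq_one [Fintype ι] [DecidableEq ι] (p x : ι → ℝ)
    (hp : ∀ k, 0 ≤ p k) (hp1 : ∑ k, p k = 1) (k₀ : ι) :
    ∑ k, p k * x k ^ 2 - (∑ k, p k * x k) ^ 2
      ≤ (Fintype.card ι - 1) * ∑ k ∈ univ.erase k₀, min (p k) (1 / 4) * (x k - x k₀) ^ 2 := by
  have hcard : ((univ.erase k₀).card : ℝ) = Fintype.card ι - 1 := by
    rw [card_erase_of_mem (mem_univ k₀), card_univ,
      Nat.cast_sub (Fintype.card_pos_iff.2 ⟨k₀⟩), Nat.cast_one]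
  rw [← weighted_variance_sub_const univ p x (x k₀) hp1, ← hcard,
    ← sum_erase univ (a := k₀) (f := fun k => p k * (x k - x k₀) ^ 2) (by simp),
    ← sum_erase univ (a := k₀) (f := fun k => p k * (x k - x k₀)) (by simp)]
  exact weighted_variance_le_card_mul _ p _ (fun k _ => hp k)
    ((sum_le_sum_of_subset_of_nonneg (erase_subset k₀ univ) fun k _ _ => hp k).trans hp1.le)

end WeightedVariance

section Selection

variable {Ω ι : Type*} [Fintype ι] {π : Ω → ι}

lemma sum_indicator_fiber_apply {E : Type*} [AddCommMonoid E] (X : ι → Ω → E) (ω : Ω) :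
    ∑ k, (π ⁻¹' {k}).indicator (X k) ω = X (π ω) ω := by
  classical
  simp [Set.indicator_apply]

variable [MeasurableSpace Ω] [MeasurableSpace ι] [MeasurableSingletonClass ι] {P : Measure Ω}

lemma memLp_select {E : Type*} [NormedAddCommGroup E] {p : ENNReal} (hπ : Measurable π)
    {X : ι → Ω → E} (hX : ∀ k, MemLp (X k) p P) : MemLp (fun ω => X (π ω) ω) p P := by
  simp_rw [← sum_indicator_fiber_apply X]
  exact memLp_finsetSum _ fun k _ => (hX k).indicator (hπ (measurableSet_singleton k))

lemma sum_measureReal_fiber [IsProbabilityMeasure P] (hπ : Measurable π) :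
    ∑ k, P.real (π ⁻¹' {k}) = 1 := by
  rw [sum_measureReal_preimage_singleton _ fun k _ => hπ (measurableSet_singleton k)]
  simp

lemma integral_select_of_indepFun [IsFiniteMeasure P] (hπ : Measurable π) {X : ι → Ω → ℝ}
    (hX : ∀ k, Integrable (X k) P) (hind : IndepFun π (fun ω k => X k ω) P) :
    ∫ ω, X (π ω) ω ∂P = ∑ k, P.real (π ⁻¹' {k}) * ∫ ω, X k ω ∂P := by
  simp_rw [← sum_indicator_fiber_apply X]
  rw [integral_finsetSum _ fun k _ => (hX k).indicator (hπ (measurableSet_singleton k))]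
  refine sum_congr rfl fun k _ => ?_
  have hfiber : MeasurableSet (π ⁻¹' {k}) := hπ (measurableSet_singleton k)
  have hindk : IndepFun ((π ⁻¹' {k}).indicator (1 : Ω → ℝ)) (X k) P := by
    exact (hind.comp (φ := Set.indicator {k} (1 : ι → ℝ)) (ψ := fun x => x k)
      (measurable_one.indicator (measurableSet_singleton k))
      (measurable_pi_apply (X := fun _ => ℝ) k) :)
  calc ∫ ω, (π ⁻¹' {k}).indicator (X k) ω ∂P
      = ∫ ω, (π ⁻¹' {k}).indicator (1 : Ω → ℝ) ω * X k ω ∂P := by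
        simp only [← Set.indicator_mul_left, Pi.one_apply, one_mul]
    _ = P.real (π ⁻¹' {k}) * ∫ ω, X k ω ∂P := by
        rw [hindk.integral_fun_mul_eq_mul_integral
          (aestronglyMeasurable_one.indicator hfiber) (hX k).aestronglyMeasurable,
          integral_indicator_one hfiber]

lemma variance_select_of_indepFun [IsProbabilityMeasure P] (hπ : Measurable π)
    {X : ι → Ω → ℝ} (hX : ∀ k, MemLp (X k) 2 P) (hind : IndepFun π (fun ω k => X k ω) P) :
    variance (fun ω => X (π ω) ω) P
      = ∑ k, P.real (π ⁻¹' {k}) * variance (X k) P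
        + (∑ k, P.real (π ⁻¹' {k}) * (∫ ω, X k ω ∂P) ^ 2
          - (∑ k, P.real (π ⁻¹' {k}) * ∫ ω, X k ω ∂P) ^ 2) := by
  have hsq : ∫ ω, X (π ω) ω ^ 2 ∂P = ∑ k, P.real (π ⁻¹' {k}) * ∫ ω, X k ω ^ 2 ∂P :=
    integral_select_of_indepFun (X := fun k ω => X k ω ^ 2) hπ (fun k => (hX k).integrable_sq)
      (hind.comp measurable_id
        (measurable_pi_lambda _ fun k => (measurable_pi_apply k).pow_const 2))
  rw [variance_eq_sub (memLp_select hπ hX)]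
  simp only [Pi.pow_apply]
  rw [hsq, integral_select_of_indepFun hπ (fun k => (hX k).integrable one_le_two) hind]
  simp only [variance_eq_sub (hX _), Pi.pow_apply, mul_sub]
  rw [sum_sub_distrib]
  ring

lemma meanVariance_select_sub_le [IsProbabilityMeasure P] [DecidableEq ι] (lam : ℝ)
    (hπ : Measurable π) {X : ι → Ω → ℝ} (hX : ∀ k, MemLp (X k) 2 P)
    (hind : IndepFun π (fun ω k => X k ω) P) {m v : ι → ℝ} (hm : ∀ k, ∫ ω, X k ω ∂P = m k)
    (hv : ∀ k, variance (X k) P = v k) (k₀ : ι) :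
    variance (fun ω => X (π ω) ω) P - lam * ∫ ω, X (π ω) ω ∂P - (v k₀ - lam * m k₀)
      ≤ ∑ k, P.real (π ⁻¹' {k}) * ((v k - lam * m k) - (v k₀ - lam * m k₀))
        + (Fintype.card ι - 1) * ∑ k ∈ univ.erase k₀,
            min (P.real (π ⁻¹' {k})) (1 / 4) * (m k - m k₀) ^ 2 := by
  have hp1 := sum_measureReal_fiber (P := P) hπ
  have hspread := weighted_variance_le_of_sum_eq_one (fun k => P.real (π ⁻¹' {k})) m
    (fun k => measureReal_nonneg) hp1 k₀
  rw [variance_select_of_indepFun hπ hX hind,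
    integral_select_of_indepFun hπ (fun k => (hX k).integrable one_le_two) hind]
  have hmix : ∑ k, P.real (π ⁻¹' {k}) * ((v k - lam * m k) - (v k₀ - lam * m k₀))
      = ∑ k, P.real (π ⁻¹' {k}) * v k - lam * ∑ k, P.real (π ⁻¹' {k}) * m k
        - (v k₀ - lam * m k₀) := by
    simp only [mul_sub, sum_sub_distrib, ← sum_mul, hp1, one_mul, mul_left_comm _ lam,
      ← mul_sum]
  simp only [hm, hv, hmix]
  linarith

end Selection

lemma integral_sum_ite_eq_sum_measureReal {Ω ι τ : Type*} [MeasurableSpace Ω]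
    [MeasurableSpace ι] [MeasurableSingletonClass ι] [DecidableEq ι] {P : Measure Ω}
    [IsFiniteMeasure P]
    (s : Finset τ) {π : τ → Ω → ι} (hπ : ∀ t, Measurable (π t)) (k : ι) :
    ∫ ω, ∑ t ∈ s, (if π t ω = k then (1 : ℝ) else 0) ∂P = ∑ t ∈ s, P.real (π t ⁻¹' {k}) := by
  have hfiber : ∀ t, MeasurableSet (π t ⁻¹' {k}) := fun t => hπ t (measurableSet_singleton k)
  have hite : ∀ t ω, (if π t ω = k then (1 : ℝ) else 0) = (π t ⁻¹' {k}).indicator 1 ω :=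
    fun t ω => by by_cases h : π t ω = k <;> simp [h]
  simp_rw [hite]
  rw [integral_finsetSum _ fun t _ => (integrable_const 1).indicator (hfiber t)]
  exact sum_congr rfl fun t _ => integral_indicator_one (hfiber t)

theorem regret_upper_bound_decision_variance_general
    {Ω : Type*} [MeasurableSpace Ω] (P : Measure Ω) [IsProbabilityMeasure P]
    (K T : ℕ)
    (lam : ℝ)
    -- rewards: `X k t` is the reward of action `k` at time `t`
    (X : Fin K → Fin T → Ω → ℝ)
    (hXL2 : ∀ k t, MemLp (X k t) 2 P)
    (m v : Fin K → ℝ)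
    (hmean : ∀ k t, ∫ ω, X k t ω ∂P = m k)
    (hvar : ∀ k t, variance (X k t) P = v k)
    -- the policy
    (π : Fin T → Ω → Fin K)
    (hπmeas : ∀ t, Measurable (π t))
    -- the action at time `t` is independent of the time-`t` rewards
    (hπindep : ∀ t, IndepFun (π t) (fun ω (k : Fin K) => X k t ω) P)
    -- the optimal action `k*`
    (kstar : Fin K) :
    (∑ t, (variance (fun ω => X (π t ω) t ω) P - lam * ∫ ω, X (π t ω) t ω ∂P))
        - T * (v kstar - lam * m kstar)
      ≤ (∑ k, (∫ ω, (∑ t, if π t ω = k then (1:ℝ) else 0) ∂P)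
            * ((v k - lam * m k) - (v kstar - lam * m kstar)))
        + (K - 1) * ∑ k ∈ Finset.univ.erase kstar, ∑ t,
            min ((P {ω | π t ω = k}).toReal) (1/4) * (m k - m kstar) ^ 2 := by
  have hstep := fun t => meanVariance_select_sub_le lam (hπmeas t) (fun k => hXL2 k t)
    (hπindep t) (fun k => hmean k t) (fun k => hvar k t) kstar
  simp only [Fintype.card_fin] at hstep
  calc _ = ∑ t, (variance (fun ω => X (π t ω) t ω) P - lam * ∫ ω, X (π t ω) t ω ∂P
          - (v kstar - lam * m kstar)) := by
        simp only [sum_sub_distrib, sum_const, card_univ, Fintype.card_fin, nsmul_eq_mul, mul_sub]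
    _ ≤ _ := sum_le_sum fun t _ => hstep t
    _ = _ := by
        simp only [integral_sum_ite_eq_sum_measureReal _ hπmeas, sum_add_distrib, sum_mul,
          ← mul_sum]
        rw [sum_comm, sum_comm (s := univ.erase kstar)]
        rfl

/-- **Regret upper bound (eq. (12) of the paper).** For any policy `π`,
`R_π(T) ≤ Σ_k E[τ_{k,T}]·Γ_k + (K−1)·Σ_{k≠k*} Σ_t min(Pr[π_t = k], 1/4)·Δ_k²`. -/
theorem regret_upper_bound_decision_variance
    {Ω : Type*} [MeasurableSpace Ω] (P : Measure Ω) [IsProbabilityMeasure P]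
    (K T : ℕ) (hK : 0 < K)
    (lam : ℝ) (hlam : 0 ≤ lam)
    -- rewards: `X k t` is the reward of action `k` at time `t`
    (X : Fin K → Fin T → Ω → ℝ)
    (hXmeas : ∀ k t, Measurable (X k t))
    (hXL2 : ∀ k t, MemLp (X k t) 2 P)
    -- the rewards are jointly independent across actions and times ...
    (hXindep : iIndepFun (fun p : Fin K × Fin T => X p.1 p.2) P)
    -- ... and identically distributed over time for each action
    (hXid : ∀ k (t t' : Fin T), Measure.map (X k t) P = Measure.map (X k t') P)
    (m v : Fin K → ℝ)
    (hmean : ∀ k t, ∫ ω, X k t ω ∂P = m k)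
    (hvar : ∀ k t, variance (X k t) P = v k)
    -- the policy
    (π : Fin T → Ω → Fin K)
    (hπmeas : ∀ t, Measurable (π t))
    -- the action at time `t` is independent of the time-`t` rewards
    (hπindep : ∀ t, IndepFun (π t) (fun ω (k : Fin K) => X k t ω) P)
    -- the optimal action `k*`
    (kstar : Fin K)
    (hkstar : ∀ k, v kstar - lam * m kstar ≤ v k - lam * m k) :
    (∑ t, (variance (fun ω => X (π t ω) t ω) P - lam * ∫ ω, X (π t ω) t ω ∂P))
        - T * (v kstar - lam * m kstar)
      ≤ (∑ k, (∫ ω, (∑ t, if π t ω = k then (1:ℝ) else 0) ∂P)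
            * ((v k - lam * m k) - (v kstar - lam * m kstar)))
        + (K - 1) * ∑ k ∈ Finset.univ.erase kstar, ∑ t,
            min ((P {ω | π t ω = k}).toReal) (1/4) * (m k - m kstar) ^ 2 :=
  regret_upper_bound_decision_variance_general P K T lam X hXL2 m v hmean hvar π hπmeas hπindep
    kstar
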